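/- Let n, r be positive integers, a_1 ∈ {0,…,n−1}, a_2 ∈ {0,…,r−1}, and w ∈ ℂ. Define ā_1 := (n − a_1)·𝟙{a_1 ≠ 0}; a'_1 := (n − a_1)·𝟙{a_1 ≠ 0} if n is odd and a'_1 := n/2 − a_1 + n·𝟙{a_1 > n/2} if n is even; and ā'_1 := a_1 if n is odd and ā'_1 := n/2 + a_1 − n·𝟙{a_1 ≥ n/2} if n is even. Then H(T^{(<)}_{a_1,a_2}(n,r); w) = H(T_{ā_1,a_2}(n,r); w), H(T^{(≤)}_{a_1,a_2}(n,r); w) = H(T_{a'_1,a_2}(n,r); w), and H(T^{(≥)}_{a_1,a_2}(n,r); w) = H(T_{ā'_1,a_2}(n,r); w); in particular |T^{(<)}_{a_1,a_2}(n,r)| = |T_{ā_1,a_2}(n,r)|, |T^{(≤)}_{a_1,a_2}(n,r)| = |T_{a'_1,a_2}(n,r)|, and |T^{(≥)}_{a_1,a_2}(n,r)| = |T_{ā'_1,a_2}(n,r)|. -/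
import Mathlib


open scoped Classical
open Finset

/-- `γ(x) = ∑_{i=1}^{n-1} i·𝟙{x_i > x_{i+1}}` (1-indexed). -/
noncomputable def gam {n r : ℕ} (x : Fin n → Fin r) : ℕ :=
  ∑ i : Fin n, if h : (i : ℕ) + 1 < n then
      (if (x ⟨(i : ℕ) + 1, h⟩ : ℕ) < (x i : ℕ) then (i : ℕ) + 1 else 0) else 0

/-- `γ_{(≥)}(x) = ∑_{i=1}^{n-1} i·𝟙{x_i ≥ x_{i+1}}` (1-indexed). -/
noncomputable def gamGe {n r : ℕ} (x : Fin n → Fin r) : ℕ :=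
  ∑ i : Fin n, if h : (i : ℕ) + 1 < n then
      (if (x ⟨(i : ℕ) + 1, h⟩ : ℕ) ≤ (x i : ℕ) then (i : ℕ) + 1 else 0) else 0

/-- `λ_{(<)}(x) = ∑_{i=1}^{n-1} i·𝟙{x_i < x_{i+1}}` (1-indexed). -/
noncomputable def lamLt {n r : ℕ} (x : Fin n → Fin r) : ℕ :=
  ∑ i : Fin n, if h : (i : ℕ) + 1 < n then
      (if (x i : ℕ) < (x ⟨(i : ℕ) + 1, h⟩ : ℕ) then (i : ℕ) + 1 else 0) else 0

/-- `λ_{(≤)}(x) = ∑_{i=1}^{n-1} i·𝟙{x_i ≤ x_{i+1}}` (1-indexed). -/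
noncomputable def lamLe {n r : ℕ} (x : Fin n → Fin r) : ℕ :=
  ∑ i : Fin n, if h : (i : ℕ) + 1 < n then
      (if (x i : ℕ) ≤ (x ⟨(i : ℕ) + 1, h⟩ : ℕ) then (i : ℕ) + 1 else 0) else 0

/-- `σ(x) = ∑ x_i`. -/
noncomputable def sig {n r : ℕ} (x : Fin n → Fin r) : ℕ := ∑ i : Fin n, (x i : ℕ)

/-- The non-binary Tenengolts code `T_{a₁,a₂}(n,r)`. -/
noncomputable def Tcode (n r a₁ a₂ : ℕ) : Finset (Fin n → Fin r) :=
  Finset.univ.filter (fun x => gam x ≡ a₁ [MOD n] ∧ sig x ≡ a₂ [MOD r])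

/-- The variant `T^{(≥)}_{a₁,a₂}(n,r)`. -/
noncomputable def TgeCode (n r a₁ a₂ : ℕ) : Finset (Fin n → Fin r) :=
  Finset.univ.filter (fun x => gamGe x ≡ a₁ [MOD n] ∧ sig x ≡ a₂ [MOD r])

/-- The variant `T^{(<)}_{a₁,a₂}(n,r)`. -/
noncomputable def TltCode (n r a₁ a₂ : ℕ) : Finset (Fin n → Fin r) :=
  Finset.univ.filter (fun x => lamLt x ≡ a₁ [MOD n] ∧ sig x ≡ a₂ [MOD r])

/-- The variant `T^{(≤)}_{a₁,a₂}(n,r)`. -/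
noncomputable def TleCode (n r a₁ a₂ : ℕ) : Finset (Fin n → Fin r) :=
  Finset.univ.filter (fun x => lamLe x ≡ a₁ [MOD n] ∧ sig x ≡ a₂ [MOD r])

/-- The Hamming weight of `x`. -/
noncomputable def hwt {n r : ℕ} (x : Fin n → Fin r) : ℕ :=
  (Finset.univ.filter (fun i => (x i : ℕ) ≠ 0)).card

/-- The Hamming weight enumerator of a code `T`. -/
noncomputable def hwe {n r : ℕ} (T : Finset (Fin n → Fin r)) (w : ℂ) : ℂ :=
  ∑ x ∈ T, w ^ hwt x

noncomputable def xval {n r : ℕ} (x : Fin n → Fin r) : ℕ → ℕ :=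
  fun j => if h : j < n then (x ⟨j, h⟩ : ℕ) else 0

lemma gam_eq {n r : ℕ} (x : Fin n → Fin r) :
    gam x = ∑ j ∈ Finset.range (n-1), if xval x (j+1) < xval x j then j+1 else 0 := by
  have h2 := Fin.sum_univ_eq_sum_range
    (fun j => if h : j + 1 < n then (if xval x (j+1) < xval x j then j+1 else 0) else 0) n
  have h1 : gam x = ∑ i : Fin n, (fun j => if h : j + 1 < n then
      (if xval x (j+1) < xval x j then j+1 else 0) else 0) (i : ℕ) := by
    refine Finset.sum_congr rfl fun i _ => ?_
    by_cases h : (i : ℕ) + 1 < n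
    · simp [xval, h, i.isLt]
    · simp [h]
  have h3 := Finset.sum_subset (f := fun j => if h : j + 1 < n then
      (if xval x (j+1) < xval x j then j+1 else 0) else 0)
      (Finset.range_subset_range.mpr (show n - 1 ≤ n by omega))
      (fun j hj hj' => by
        simp only [Finset.mem_range] at hj hj'
        have : ¬ (j + 1 < n) := by omega
        simp [this])
  rw [h1, h2, ← h3]
  refine Finset.sum_congr rfl fun j hj => ?_
  simp only [Finset.mem_range] at hj
  have : j + 1 < n := by omega
  simp [this]

lemma lamLt_eq {n r : ℕ} (x : Fin n → Fin r) :
    lamLt x = ∑ j ∈ Finset.range (n-1), if xval x j < xval x (j+1) then j+1 else 0 := by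
  have h2 := Fin.sum_univ_eq_sum_range
    (fun j => if h : j + 1 < n then (if xval x j < xval x (j+1) then j+1 else 0) else 0) n
  have h1 : lamLt x = ∑ i : Fin n, (fun j => if h : j + 1 < n then
      (if xval x j < xval x (j+1) then j+1 else 0) else 0) (i : ℕ) := by
    refine Finset.sum_congr rfl fun i _ => ?_
    by_cases h : (i : ℕ) + 1 < n
    · simp [xval, h, i.isLt]
    · simp [h]
  have h3 := Finset.sum_subset (f := fun j => if h : j + 1 < n then
      (if xval x j < xval x (j+1) then j+1 else 0) else 0)
      (Finset.range_subset_range.mpr (show n - 1 ≤ n by omega))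
      (fun j hj hj' => by
        simp only [Finset.mem_range] at hj hj'
        have : ¬ (j + 1 < n) := by omega
        simp [this])
  rw [h1, h2, ← h3]
  refine Finset.sum_congr rfl fun j hj => ?_
  simp only [Finset.mem_range] at hj
  have : j + 1 < n := by omega
  simp [this]

lemma xval_rev {n r : ℕ} (x : Fin n → Fin r) {j : ℕ} (hj : j < n) :
    xval (fun i => x (Fin.rev i)) j = xval x (n - 1 - j) := by
  have h2 : n - 1 - j < n := by omega
  simp only [xval, dif_pos hj, dif_pos h2]
  have h3 : (⟨j, hj⟩ : Fin n).rev = ⟨n - 1 - j, h2⟩ := by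
    apply Fin.ext
    rw [Fin.val_rev]
    show n - (j + 1) = n - 1 - j
    omega
  rw [h3]

lemma gamrev_add_lamLt {n r : ℕ} (x : Fin n → Fin r) :
    ∃ c, gam (fun i => x (Fin.rev i)) + lamLt x = n * c := by
  rw [gam_eq, lamLt_eq]
  have key : ∑ j ∈ Finset.range (n-1),
      (if xval (fun i => x (Fin.rev i)) (j+1) < xval (fun i => x (Fin.rev i)) j then j+1 else 0)
      = ∑ j ∈ Finset.range (n-1), (if xval x j < xval x (j+1) then n - 1 - j else 0) := by
    refine Finset.sum_nbij' (fun j => n - 2 - j) (fun j => n - 2 - j) ?_ ?_ ?_ ?_ ?_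
    · intro a ha; simp only [Finset.mem_range] at *; omega
    · intro a ha; simp only [Finset.mem_range] at *; omega
    · intro a ha; simp only [Finset.mem_range] at ha; show n - 2 - (n - 2 - a) = a; omega
    · intro a ha; simp only [Finset.mem_range] at ha; show n - 2 - (n - 2 - a) = a; omega
    · intro a ha
      simp only [Finset.mem_range] at ha
      rw [xval_rev x (by omega), xval_rev x (by omega)]
      have e1 : n - 1 - (a + 1) = n - 2 - a := by omega
      have e2 : n - 1 - a = (n - 2 - a) + 1 := by omega
      have e3 : n - 1 - (n - 2 - a) = a + 1 := by omega
      rw [e1, e2, e3]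
  rw [key, ← Finset.sum_add_distrib]
  refine ⟨∑ j ∈ Finset.range (n-1), if xval x j < xval x (j+1) then 1 else 0, ?_⟩
  rw [Finset.mul_sum]
  refine Finset.sum_congr rfl fun j hj => ?_
  simp only [Finset.mem_range] at hj
  split_ifs <;> omega

/-- The triangular-sum constant. -/
def Sconst (n : ℕ) : ℕ := ∑ j ∈ Finset.range n, j

lemma Sconst_mul_two (n : ℕ) : Sconst n * 2 = n * (n - 1) :=
  Finset.sum_range_id_mul_two n

lemma sum_ite_eq_Sconst (n : ℕ) :
    (∑ i : Fin n, (if (i : ℕ) + 1 < n then (i : ℕ) + 1 else 0)) = Sconst n := by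
  rw [Fin.sum_univ_eq_sum_range (fun j => if j + 1 < n then j + 1 else 0) n]
  rcases Nat.eq_zero_or_pos n with h | h
  · simp [h, Sconst]
  have h3 := Finset.sum_subset (f := fun j => if j + 1 < n then j + 1 else 0)
      (Finset.range_subset_range.mpr (show n - 1 ≤ n by omega))
      (fun j hj hj' => by
        simp only [Finset.mem_range] at hj hj'
        have : ¬ (j + 1 < n) := by omega
        simp [this])
  rw [← h3]
  have h4 : ∀ j ∈ Finset.range (n-1), (if j + 1 < n then j + 1 else 0) = j + 1 := by
    intro j hj
    simp only [Finset.mem_range] at hj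
    have : j + 1 < n := by omega
    simp [this]
  rw [Finset.sum_congr rfl h4, Sconst,
    show n = (n - 1) + 1 by omega, Finset.sum_range_succ' (fun j => j) (n-1)]
  simp

lemma lamLe_add_gam {n r : ℕ} (x : Fin n → Fin r) :
    lamLe x + gam x = Sconst n := by
  rw [← sum_ite_eq_Sconst, lamLe, gam, ← Finset.sum_add_distrib]
  refine Finset.sum_congr rfl fun i _ => ?_
  by_cases h : (i : ℕ) + 1 < n
  · rw [dif_pos h, dif_pos h, if_pos h]
    split_ifs <;> omega
  · rw [dif_neg h, dif_neg h, if_neg h]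

lemma gamGe_add_lamLt {n r : ℕ} (x : Fin n → Fin r) :
    gamGe x + lamLt x = Sconst n := by
  rw [← sum_ite_eq_Sconst, gamGe, lamLt, ← Finset.sum_add_distrib]
  refine Finset.sum_congr rfl fun i _ => ?_
  by_cases h : (i : ℕ) + 1 < n
  · rw [dif_pos h, dif_pos h, if_pos h]
    split_ifs <;> omega
  · rw [dif_neg h, dif_neg h, if_neg h]

lemma sig_rev {n r : ℕ} (x : Fin n → Fin r) : sig (fun i => x (Fin.rev i)) = sig x :=
  Fintype.sum_bijective Fin.rev Fin.rev_bijective _ _ (fun _ => rfl)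

lemma hwt_rev {n r : ℕ} (x : Fin n → Fin r) : hwt (fun i => x (Fin.rev i)) = hwt x := by
  rw [hwt, hwt]
  refine Finset.card_bij' (fun i _ => Fin.rev i) (fun i _ => Fin.rev i) ?_ ?_ ?_ ?_
  · intro a ha
    have := (Finset.mem_filter.mp ha).2
    simp only [Finset.mem_filter, Finset.mem_univ, true_and]
    exact this
  · intro a ha
    have := (Finset.mem_filter.mp ha).2
    simp only [Finset.mem_filter, Finset.mem_univ, true_and]
    simpa [Fin.rev_rev] using this
  · intro a _; exact Fin.rev_rev a
  · intro a _; exact Fin.rev_rev a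

/-- reversal image description of `Tcode` from `TltCode`. -/
lemma Tcode_eq_image {n r : ℕ} (a c a₂ : ℕ) (hac : a + c ≡ 0 [MOD n]) :
    Tcode n r c a₂ = (TltCode n r a a₂).image (fun x => fun i => x (Fin.rev i)) := by
  ext y
  simp only [Tcode, TltCode, Finset.mem_image, Finset.mem_filter, Finset.mem_univ, true_and]
  constructor
  · rintro ⟨h1, h2⟩
    refine ⟨fun i => y (Fin.rev i), ⟨?_, by rw [sig_rev]; exact h2⟩, ?_⟩
    · obtain ⟨cc, hcc⟩ := gamrev_add_lamLt (fun i => y (Fin.rev i))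
      have hyy : (fun i => (fun i => y (Fin.rev i)) (Fin.rev i)) = y := by
        funext i; simp [Fin.rev_rev]
      rw [hyy] at hcc
      have hmod : gam y + lamLt (fun i => y (Fin.rev i)) ≡ c + a [MOD n] := by
        calc gam y + lamLt (fun i => y (Fin.rev i)) ≡ 0 [MOD n] := by
              rw [hcc]; exact (Nat.modEq_zero_iff_dvd).mpr ⟨cc, rfl⟩
          _ ≡ c + a [MOD n] := ((Nat.add_comm a c) ▸ hac).symm
      exact Nat.ModEq.add_left_cancel h1 hmod
    · funext i; simp [Fin.rev_rev]
  · rintro ⟨x, ⟨h1, h2⟩, rfl⟩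
    constructor
    · obtain ⟨cc, hcc⟩ := gamrev_add_lamLt x
      have hmod : gam (fun i => x (Fin.rev i)) + lamLt x ≡ c + a [MOD n] := by
        calc gam (fun i => x (Fin.rev i)) + lamLt x ≡ 0 [MOD n] := by
              rw [hcc]; exact (Nat.modEq_zero_iff_dvd).mpr ⟨cc, rfl⟩
          _ ≡ c + a [MOD n] := ((Nat.add_comm a c) ▸ hac).symm
      exact Nat.ModEq.add_right_cancel h1 hmod
    · rw [sig_rev]; exact h2

lemma rev_injective {n r : ℕ} :
    Function.Injective (fun (x : Fin n → Fin r) => fun i => x (Fin.rev i)) := by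
  intro x y h
  funext i
  have := congrFun h (Fin.rev i)
  simpa [Fin.rev_rev] using this

lemma hwe_Tlt_eq {n r : ℕ} (a c a₂ : ℕ) (w : ℂ) (hac : a + c ≡ 0 [MOD n]) :
    hwe (TltCode n r a a₂) w = hwe (Tcode n r c a₂) w ∧
    (TltCode n r a a₂).card = (Tcode n r c a₂).card := by
  rw [Tcode_eq_image a c a₂ hac]
  constructor
  · rw [hwe, hwe, Finset.sum_image (fun x _ y _ h => rev_injective h)]
    refine Finset.sum_congr rfl fun x _ => ?_
    rw [hwt_rev]
  · rw [Finset.card_image_of_injective _ rev_injective]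

/-- equal filters when the first congruence conditions are equivalent -/
lemma cancel_iff {n A B a b S : ℕ} (hab : A + B = S) (hs : a + b ≡ S [MOD n]) :
    (A ≡ a [MOD n] ↔ B ≡ b [MOD n]) := by
  have hS : A + B ≡ a + b [MOD n] := by rw [hab]; exact hs.symm
  exact ⟨fun h => Nat.ModEq.add_left_cancel h hS, fun h => Nat.ModEq.add_right_cancel h hS⟩

lemma Tle_eq_Tcode {n r : ℕ} (a b a₂ : ℕ) (hs : a + b ≡ Sconst n [MOD n]) :
    TleCode n r a a₂ = Tcode n r b a₂ := by
  ext x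
  simp only [TleCode, Tcode, Finset.mem_filter, Finset.mem_univ, true_and]
  rw [cancel_iff (lamLe_add_gam x) hs]

lemma Tge_eq_Tlt {n r : ℕ} (a b a₂ : ℕ) (hs : a + b ≡ Sconst n [MOD n]) :
    TgeCode n r a a₂ = TltCode n r b a₂ := by
  ext x
  simp only [TgeCode, TltCode, Finset.mem_filter, Finset.mem_univ, true_and]
  rw [cancel_iff (gamGe_add_lamLt x) hs]


theorem stmt_15 (n r : ℕ) (hn : 0 < n) (hr : 0 < r)
    (a₁ a₂ : ℕ) (ha₁ : a₁ < n) (ha₂ : a₂ < r) (w : ℂ)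
    (abar₁ : ℕ) (habar₁ : abar₁ = (n - a₁) * (if a₁ ≠ 0 then 1 else 0))
    (a₁' : ℕ)
    (ha₁' : a₁' = if Odd n then (n - a₁) * (if a₁ ≠ 0 then 1 else 0)
                  else n / 2 + n * (if n / 2 < a₁ then 1 else 0) - a₁)
    (abar₁' : ℕ)
    (habar₁' : abar₁' = if Odd n then a₁
                        else n / 2 + a₁ - n * (if n / 2 ≤ a₁ then 1 else 0)) :
    hwe (TltCode n r a₁ a₂) w = hwe (Tcode n r abar₁ a₂) w ∧
    hwe (TleCode n r a₁ a₂) w = hwe (Tcode n r a₁' a₂) w ∧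
    hwe (TgeCode n r a₁ a₂) w = hwe (Tcode n r abar₁' a₂) w ∧
    (TltCode n r a₁ a₂).card = (Tcode n r abar₁ a₂).card ∧
    (TleCode n r a₁ a₂).card = (Tcode n r a₁' a₂).card ∧
    (TgeCode n r a₁ a₂).card = (Tcode n r abar₁' a₂).card := by
  have hS2 : Sconst n * 2 = n * (n - 1) := Sconst_mul_two n
  -- fact A
  have hvalA : a₁ + abar₁ = if a₁ = 0 then 0 else n := by
    rw [habar₁]; rcases eq_or_ne a₁ 0 with h | h <;> simp [h] <;> omega
  have factA : a₁ + abar₁ ≡ 0 [MOD n] := by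
    rw [hvalA]
    split_ifs
    · rfl
    · exact Nat.modEq_zero_iff_dvd.mpr dvd_rfl
  -- facts B and C by parity
  have hBC : (a₁ + a₁' ≡ Sconst n [MOD n]) ∧ (Sconst n + abar₁ + abar₁' ≡ 0 [MOD n]) := by
    rcases Nat.even_or_odd n with heven | hodd
    · -- even case
      obtain ⟨m, hm⟩ := heven
      obtain ⟨k, rfl⟩ : ∃ k, m = k + 1 := ⟨m - 1, by omega⟩
      have hn2 : n = 2 * k + 2 := by omega
      have hmod2 : n % 2 = 0 := by omega
      have hnotodd : ¬ Odd n := by simp [Nat.odd_iff, hmod2]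
      have hSv : Sconst n = (k + 1) * (2 * k + 1) := by
        refine Nat.eq_of_mul_eq_mul_right (show 0 < 2 by norm_num) ?_
        rw [hS2, show n - 1 = 2 * k + 1 by omega, hn2]; ring
      have hhalf : n / 2 = k + 1 := by omega
      have hSz : (Sconst n : ℤ) = ((k : ℤ) + 1) * (2 * k + 1) := by
        rw [hSv]; push_cast; ring
      have hnz : (n : ℤ) = 2 * (k : ℤ) + 2 := by rw [hn2]; push_cast; ring
      have ha1v : a₁' = (k + 1) + n * (if k + 1 < a₁ then 1 else 0) - a₁ := by
        rw [ha₁', if_neg hnotodd, hhalf]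
      have hbv : abar₁' = (k + 1) + a₁ - n * (if k + 1 ≤ a₁ then 1 else 0) := by
        rw [habar₁', if_neg hnotodd, hhalf]
      constructor
      · rcases lt_or_ge (k + 1) a₁ with h | h
        · have hv : a₁ + a₁' = 3 * k + 3 := by rw [ha1v, if_pos h]; omega
          rw [hv, Nat.modEq_iff_dvd]
          exact ⟨(k : ℤ) - 1, by rw [hSz, hnz]; push_cast; ring⟩
        · have hv : a₁ + a₁' = k + 1 := by rw [ha1v, if_neg (not_lt.mpr h)]; omega
          rw [hv, Nat.modEq_iff_dvd]
          exact ⟨(k : ℤ), by rw [hSz, hnz]; push_cast; ring⟩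
      · have hL : abar₁ + abar₁' = (if a₁ = 0 ∨ k + 1 ≤ a₁ then k + 1 else 3 * k + 3) := by
          rw [habar₁, hbv]; split_ifs <;> omega
        by_cases hc : a₁ = 0 ∨ k + 1 ≤ a₁
        · rw [if_pos hc] at hL
          refine Nat.modEq_zero_iff_dvd.mpr ⟨k + 1, ?_⟩
          have h1 : Sconst n + abar₁ + abar₁' = Sconst n + (k + 1) := by omega
          rw [h1, hSv, hn2]; ring
        · rw [if_neg hc] at hL
          refine Nat.modEq_zero_iff_dvd.mpr ⟨k + 2, ?_⟩
          have h1 : Sconst n + abar₁ + abar₁' = Sconst n + (3 * k + 3) := by omega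
          rw [h1, hSv, hn2]; ring
    · -- odd case
      obtain ⟨m, hm⟩ := hodd
      have hodd' : Odd n := ⟨m, hm⟩
      have hSv : Sconst n = n * m := by
        refine Nat.eq_of_mul_eq_mul_right (show 0 < 2 by norm_num) ?_
        rw [hS2, show n - 1 = 2 * m by omega]; ring
      have hS0 : Sconst n ≡ 0 [MOD n] := Nat.modEq_zero_iff_dvd.mpr ⟨m, hSv⟩
      have ha1v : a₁' = (n - a₁) * (if a₁ ≠ 0 then 1 else 0) := by
        rw [ha₁', if_pos hodd']
      have hbv : abar₁' = a₁ := by rw [habar₁', if_pos hodd']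
      constructor
      · have hv : a₁ + a₁' = if a₁ = 0 then 0 else n := by
          rw [ha1v]; rcases eq_or_ne a₁ 0 with h | h <;> simp [h] <;> omega
        have h0 : a₁ + a₁' ≡ 0 [MOD n] := by
          rw [hv]; split_ifs
          · rfl
          · exact Nat.modEq_zero_iff_dvd.mpr dvd_rfl
        exact h0.trans hS0.symm
      · have h2 : abar₁ + abar₁' ≡ 0 [MOD n] := by
          rw [hbv]
          have : abar₁ + a₁ = a₁ + abar₁ := by omega
          rw [this]; exact factA
        have := Nat.ModEq.add hS0 h2
        simpa [Nat.add_assoc] using this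
  obtain ⟨factB, factC⟩ := hBC
  have factB2 : a₁ + (Sconst n + abar₁) ≡ Sconst n [MOD n] := by
    have h1 : a₁ + (Sconst n + abar₁) = (a₁ + abar₁) + Sconst n := by omega
    rw [h1]
    simpa using Nat.ModEq.add_right (Sconst n) factA
  have factC' : (Sconst n + abar₁) + abar₁' ≡ 0 [MOD n] := by
    have h1 : (Sconst n + abar₁) + abar₁' = Sconst n + abar₁ + abar₁' := by omega
    rw [h1]; exact factC
  obtain ⟨hlt_hwe, hlt_card⟩ := hwe_Tlt_eq (n := n) (r := r) a₁ abar₁ a₂ w factA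
  have hle := Tle_eq_Tcode (n := n) (r := r) a₁ a₁' a₂ factB
  have hge1 := Tge_eq_Tlt (n := n) (r := r) a₁ (Sconst n + abar₁) a₂ factB2
  obtain ⟨hge_hwe, hge_card⟩ :=
    hwe_Tlt_eq (n := n) (r := r) (Sconst n + abar₁) abar₁' a₂ w factC'
  exact ⟨hlt_hwe, by rw [hle], by rw [hge1]; exact hge_hwe,
    hlt_card, by rw [hle], by rw [hge1]; exact hge_card⟩
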